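/- Let x ~ N(0, τ² + σ²) and let σ̂² ~ σ²·χ²_m/m be independent of x. Let F̃(t) = P( x²/(τ² + σ̂²) ≥ t ) and let T̃_m and Φ̃ denote the upper tail functions of the t-distribution with m degrees of freedom and the standard normal, respectively. Then for every t ≥ 0, 2Φ̃(√t) ≤ F̃(t) ≤ 2T̃_m(√t). -/

import Mathlib

open MeasureTheory

/-- Density of the standard normal distribution. -/
noncomputable def stdNormalPDF (t : ℝ) : ℝ :=
  (Real.sqrt (2 * Real.pi))⁻¹ * Real.exp (-(t ^ 2) / 2)

/-- Upper tail function of the standard normal distribution. -/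
noncomputable def stdNormalTail (t : ℝ) : ℝ := ∫ s in Set.Ioi t, stdNormalPDF s

/-- Density of Student's t-distribution with `m` degrees of freedom. -/
noncomputable def tPDF (m : ℕ) (t : ℝ) : ℝ :=
  Real.Gamma (((m : ℝ) + 1) / 2) / (Real.sqrt (Real.pi * m) * Real.Gamma ((m : ℝ) / 2)) *
    (1 + t ^ 2 / m) ^ (-(((m : ℝ) + 1) / 2))

/-- Upper tail function of Student's t-distribution with `m` degrees of freedom. -/
noncomputable def tTail (m : ℕ) (t : ℝ) : ℝ := ∫ s in Set.Ioi t, tPDF m s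

/-- Density of the normal distribution with mean 0 and variance `v`. -/
noncomputable def normalPDF (v t : ℝ) : ℝ :=
  (Real.sqrt (2 * Real.pi * v))⁻¹ * Real.exp (-(t ^ 2) / (2 * v))

/-- Density of `U = V/m` where `V ~ χ²_m`. -/
noncomputable def chi2OverMPDF (m : ℕ) (u : ℝ) : ℝ :=
  if 0 < u then
    (m : ℝ) * (((m : ℝ) * u) ^ ((m : ℝ) / 2 - 1) * Real.exp (-((m : ℝ) * u) / 2)) /
      (2 ^ ((m : ℝ) / 2) * Real.Gamma ((m : ℝ) / 2))
  else 0

/-- `F̃(t) = P(x²/(τ² + σ̂²) ≥ t)` where `x ~ N(0, τ² + σ²)` and `σ̂² ~ σ² χ²_m / m`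
are independent. -/
noncomputable def welchTail (m : ℕ) (τ2 σ2 t : ℝ) : ℝ :=
  ∫ x : ℝ, ∫ y in Set.Ioi (0 : ℝ),
    Set.indicator {p : ℝ × ℝ | t ≤ p.1 ^ 2 / (τ2 + p.2)} (fun _ => (1 : ℝ)) (x, y) *
      normalPDF (τ2 + σ2) x * (σ2⁻¹ * chi2OverMPDF m (y / σ2))

/-!
Write `λ = σ²/(τ² + σ²)` and `g(s) = Φ̃(√(t s))`. Conditionally on `σ̂² = σ² u`, the event
`x² ≥ t (τ² + σ̂²)` has probability `2 g(λ u + 1 - λ)`, where `u ~ χ²_m/m = Gamma(m/2, m/2)`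
has mean `1`. The function `g` is convex on `[0, ∞)`, being the convex decreasing `Φ̃`
composed with the concave `s ↦ √(t s)`. Jensen gives `g(1) ≤ E g(λ u + 1 - λ)`; convexity
between the points `u` and `1`, followed by Jensen again, gives
`E g(λ u + 1 - λ) ≤ λ E g(u) + (1 - λ) g(1) ≤ E g(u)`. Finally `2 E g(u) = P(Z² ≥ t u)` for a
standard normal `Z` independent of `u`, and `Z/√u` is Student's t with `m` degrees of freedom.
-/

open Set Real ProbabilityTheory

lemma stdNormalPDF_eq_gaussianPDFReal : stdNormalPDF = gaussianPDFReal 0 1 := by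
  ext x; simp [stdNormalPDF, gaussianPDFReal]

lemma integrable_stdNormalPDF : Integrable stdNormalPDF :=
  stdNormalPDF_eq_gaussianPDFReal ▸ integrable_gaussianPDFReal 0 1

lemma integral_stdNormalPDF : ∫ x, stdNormalPDF x = 1 :=
  stdNormalPDF_eq_gaussianPDFReal ▸ integral_gaussianPDFReal_eq_one 0 one_ne_zero

lemma stdNormalPDF_nonneg (x : ℝ) : 0 ≤ stdNormalPDF x := by
  unfold stdNormalPDF; positivity

@[fun_prop]
lemma continuous_stdNormalPDF : Continuous stdNormalPDF := by
  unfold stdNormalPDF; fun_prop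

lemma antitoneOn_stdNormalPDF : AntitoneOn stdNormalPDF (Ici 0) := by
  intro x hx y _ hxy
  unfold stdNormalPDF
  gcongr

lemma hasDerivAt_stdNormalTail (x : ℝ) : HasDerivAt stdNormalTail (-stdNormalPDF x) x := by
  have htail : stdNormalTail = fun a => stdNormalTail 0 - ∫ s in 0..a, stdNormalPDF s := by
    ext a
    rw [stdNormalTail, stdNormalTail, ← intervalIntegral.integral_Ioi_sub_Ioi'
      integrable_stdNormalPDF.integrableOn integrable_stdNormalPDF.integrableOn, sub_sub_cancel]
  rw [htail]
  exact (intervalIntegral.integral_hasDerivAt_right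
    (continuous_stdNormalPDF.intervalIntegrable _ _)
    (continuous_stdNormalPDF.stronglyMeasurableAtFilter _ _)
    continuous_stdNormalPDF.continuousAt).const_sub _

lemma continuous_stdNormalTail : Continuous stdNormalTail :=
  continuous_iff_continuousAt.2 fun x => (hasDerivAt_stdNormalTail x).continuousAt

lemma antitone_stdNormalTail : Antitone stdNormalTail :=
  antitone_of_hasDerivAt_nonpos hasDerivAt_stdNormalTail fun x =>
    neg_nonpos.2 (stdNormalPDF_nonneg x)

lemma convexOn_stdNormalTail : ConvexOn ℝ (Ici 0) stdNormalTail := by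
  refine MonotoneOn.convexOn_of_deriv (convex_Ici 0) continuous_stdNormalTail.continuousOn
    (fun x _ => (hasDerivAt_stdNormalTail x).differentiableAt.differentiableWithinAt) ?_
  rw [interior_Ici]
  intro x hx y hy hxy
  rw [(hasDerivAt_stdNormalTail x).deriv, (hasDerivAt_stdNormalTail y).deriv]
  exact neg_le_neg (antitoneOn_stdNormalPDF (Ioi_subset_Ici_self hx)
    (Ioi_subset_Ici_self hy) hxy)

lemma stdNormalTail_nonneg (a : ℝ) : 0 ≤ stdNormalTail a :=
  setIntegral_nonneg measurableSet_Ioi fun x _ => stdNormalPDF_nonneg x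

lemma stdNormalTail_le_one (a : ℝ) : stdNormalTail a ≤ 1 :=
  integral_stdNormalPDF ▸ setIntegral_le_integral integrable_stdNormalPDF
    (Filter.Eventually.of_forall stdNormalPDF_nonneg)

lemma convexOn_stdNormalTail_sqrt_mul {t : ℝ} (ht : 0 ≤ t) :
    ConvexOn ℝ (Ici 0) fun s => stdNormalTail (√(t * s)) := by
  refine ⟨convex_Ici 0, fun x hx y hy a b ha hb hab => ?_⟩
  have hsqrt : a * √(t * x) + b * √(t * y) ≤ √(t * (a * x + b * y)) := by
    simpa only [smul_eq_mul, mul_add, mul_left_comm t] using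
      strictConcaveOn_sqrt.concaveOn.2 (mul_nonneg ht hx) (mul_nonneg ht hy) ha hb hab
  calc stdNormalTail (√(t * (a • x + b • y)))
      ≤ stdNormalTail (a • √(t * x) + b • √(t * y)) := antitone_stdNormalTail hsqrt
    _ ≤ a • stdNormalTail (√(t * x)) + b • stdNormalTail (√(t * y)) :=
      convexOn_stdNormalTail.2 (sqrt_nonneg _) (sqrt_nonneg _) ha hb hab

lemma normalPDF_eq {v : ℝ} (hv : 0 < v) (x : ℝ) :
    normalPDF v x = (√v)⁻¹ * stdNormalPDF (x * (√v)⁻¹) := by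
  rw [normalPDF, stdNormalPDF, sqrt_mul (by positivity), mul_pow, inv_pow,
    sq_sqrt hv.le]
  field_simp

lemma integrable_normalPDF {v : ℝ} (hv : 0 < v) : Integrable (normalPDF v) := by
  simp_rw [funext (normalPDF_eq hv)]
  exact ((integrable_comp_mul_right_iff stdNormalPDF (by positivity)).2
    integrable_stdNormalPDF).const_mul _

lemma setIntegral_Ioi_normalPDF {v : ℝ} (hv : 0 < v) (a : ℝ) :
    ∫ x in Ioi a, normalPDF v x = stdNormalTail (a / √v) := by
  simp_rw [normalPDF_eq hv]
  rw [integral_const_mul, integral_comp_mul_right_Ioi _ _ (by positivity), smul_eq_mul, inv_inv,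
    ← mul_assoc, inv_mul_cancel₀ (by positivity), one_mul, div_eq_mul_inv, stdNormalTail]

lemma integral_indicator_le_sq_mul_normalPDF {v c : ℝ} (hv : 0 < v) :
    ∫ x, {x : ℝ | c ≤ x ^ 2}.indicator (fun _ => (1 : ℝ)) x * normalPDF v x =
      2 * stdNormalTail (√(c / v)) := by
  have hsymm : ∀ x, {x : ℝ | c ≤ x ^ 2}.indicator (fun _ => (1 : ℝ)) x * normalPDF v x =
      (Ici √c).indicator (normalPDF v) |x| := by
    intro x
    have hmem : c ≤ x ^ 2 ↔ √c ≤ |x| := by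
      rw [← sqrt_le_sqrt_iff (sq_nonneg x), sqrt_sq_eq_abs]
    simp only [indicator, mem_ofPred_eq, mem_Ici, hmem, normalPDF, sq_abs]
    split_ifs <;> ring
  have hIci :
      ∫ x in Ioi 0, (Ici √c).indicator (normalPDF v) x = ∫ x in Ioi √c, normalPDF v x := by
    rw [setIntegral_indicator measurableSet_Ici,
      setIntegral_congr_set (Filter.EventuallyEq.rfl.inter Ioi_ae_eq_Ici.symm), Ioi_inter_Ioi,
      sup_eq_right.2 (sqrt_nonneg c)]
  rw [integral_congr_ae (Filter.Eventually.of_forall hsymm), integral_comp_abs, hIci,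
    setIntegral_Ioi_normalPDF hv, sqrt_div' _ hv.le]

section Gamma

variable {a r : ℝ}

lemma integral_gammaMeasure (ha : 0 < a) (hr : 0 < r) (g : ℝ → ℝ) :
    ∫ x, g x ∂gammaMeasure a r = ∫ x in Ioi 0, gammaPDFReal a r x * g x := by
  rw [gammaMeasure, integral_withDensity_eq_integral_toReal_smul (f := gammaPDF a r)
    (measurable_gammaPDFReal a r).ennreal_ofReal (ae_of_all _ fun _ => ENNReal.ofReal_lt_top),
    ← integral_Ici_eq_integral_Ioi, setIntegral_eq_integral_of_forall_compl_eq_zero]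
  · simp only [gammaPDF, ENNReal.toReal_ofReal (gammaPDFReal_nonneg ha hr _), smul_eq_mul]
  · intro x (hx : ¬0 ≤ x)
    rw [gammaPDFReal, if_neg hx, zero_mul]

lemma ae_pos_gammaMeasure : ∀ᵐ x ∂gammaMeasure a r, 0 < x := by
  have hIic : {x : ℝ | ¬0 < x} = Iic 0 := by ext; simp
  rw [ae_iff, hIic, gammaMeasure, withDensity_apply _ measurableSet_Iic,
    setLIntegral_congr Iio_ae_eq_Iic.symm, lintegral_gammaPDF_of_nonpos le_rfl]

lemma setIntegral_gammaPDFReal_mul_rpow_mul_exp {p q : ℝ}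
    (hap : 0 < a + p) (hrq : 0 < r + q) :
    ∫ x in Ioi 0, gammaPDFReal a r x * (x ^ p * exp (-(q * x))) =
      r ^ a / Gamma a * ((1 / (r + q)) ^ (a + p) * Gamma (a + p)) := by
  rw [← integral_rpow_mul_exp_neg_mul_Ioi hap hrq, ← integral_const_mul]
  refine setIntegral_congr_fun measurableSet_Ioi fun x (hx : 0 < x) => ?_
  rw [gammaPDFReal, if_pos hx.le, add_sub_right_comm, rpow_add hx, add_mul, neg_add, exp_add]
  ring

lemma integral_id_gammaMeasure (ha : 0 < a) (hr : 0 < r) :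
    ∫ x, x ∂gammaMeasure a r = a / r := by
  have h := setIntegral_gammaPDFReal_mul_rpow_mul_exp (a := a) (r := r) (p := 1) (q := 0)
    (by linarith) (by linarith)
  simp only [rpow_one, zero_mul, neg_zero, exp_zero, mul_one, add_zero] at h
  rw [integral_gammaMeasure ha hr, h, Gamma_add_one ha.ne', rpow_add_one (by positivity), one_div,
    inv_rpow hr.le]
  field_simp

end Gamma

lemma chi2OverMPDF_eq_gammaPDFReal {m : ℕ} (hm : 0 < m) {u : ℝ} (hu : 0 < u) :
    chi2OverMPDF m u = gammaPDFReal (m / 2) (m / 2) u := by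
  have hm0 : (0 : ℝ) < m := by exact_mod_cast hm
  rw [chi2OverMPDF, if_pos hu, gammaPDFReal, if_pos hu.le, mul_rpow hm0.le hu.le,
    div_rpow hm0.le zero_le_two, rpow_sub_one hm0.ne', show -(↑m * u) / 2 = -(↑m / 2 * u) by ring]
  field_simp

lemma setIntegral_chi2OverMPDF_mul {m : ℕ} (hm : 0 < m) (g : ℝ → ℝ) :
    ∫ u in Ioi 0, chi2OverMPDF m u * g u = ∫ u, g u ∂gammaMeasure (m / 2) (m / 2) := by
  have hk : (0 : ℝ) < m / 2 := by positivity
  rw [integral_gammaMeasure hk hk]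
  exact setIntegral_congr_fun measurableSet_Ioi fun u hu => by
    rw [chi2OverMPDF_eq_gammaPDFReal hm hu]

lemma tPDF_eq {m : ℕ} (hm : 0 < m) (s : ℝ) :
    tPDF m s = (m / 2 : ℝ) ^ ((m / 2 : ℝ)) / Gamma (m / 2) *
      ((1 / (m / 2 + s ^ 2 / 2)) ^ (m / 2 + 1 / 2 : ℝ) * Gamma (m / 2 + 1 / 2)) / √(2 * π) := by
  have hm0 : (0 : ℝ) < m := by exact_mod_cast hm
  set k : ℝ := m / 2 with hk
  have hk0 : 0 < k := by positivity
  have hx : 0 < k + s ^ 2 / 2 := by positivity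
  have hbase : 1 + s ^ 2 / m = (k + s ^ 2 / 2) / k := by rw [hk]; field_simp
  rw [tPDF, ← hk, show ((m : ℝ) + 1) / 2 = k + 1 / 2 by rw [hk]; ring, hbase,
    rpow_neg (by positivity), ← inv_rpow (by positivity), inv_div, div_rpow hk0.le hx.le,
    div_rpow zero_le_one hx.le, one_rpow, rpow_add hk0, ← sqrt_eq_rpow,
    show π * m = 2 * π * k by rw [hk]; ring, sqrt_mul (by positivity)]
  field_simp

lemma integral_sqrt_mul_stdNormalPDF_gammaMeasure {m : ℕ} (hm : 0 < m) (s : ℝ) :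
    ∫ u, √u * stdNormalPDF (s * √u) ∂gammaMeasure (m / 2) (m / 2) = tPDF m s := by
  have hk : (0 : ℝ) < m / 2 := by positivity
  rw [integral_gammaMeasure hk hk, tPDF_eq hm, div_eq_mul_inv _ √(2 * π), mul_comm _ (√(2 * π))⁻¹,
    ← setIntegral_gammaPDFReal_mul_rpow_mul_exp (by positivity) (by positivity),
    ← integral_const_mul]
  refine setIntegral_congr_fun measurableSet_Ioi fun u (hu : 0 < u) => ?_
  rw [stdNormalPDF, mul_pow, sq_sqrt hu.le, sqrt_eq_rpow]
  ring_nf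

lemma integrable_stdNormalTail_comp {α : Type*} [MeasurableSpace α] {ν : Measure α}
    [IsFiniteMeasure ν] {f : α → ℝ} (hf : AEMeasurable f ν) :
    Integrable (fun x => stdNormalTail (f x)) ν :=
  .of_mem_Icc 0 1 (continuous_stdNormalTail.measurable.comp_aemeasurable hf)
    (ae_of_all _ fun _ => ⟨stdNormalTail_nonneg _, stdNormalTail_le_one _⟩)

lemma stdNormalTail_sqrt_mul_eq {t u : ℝ} (ht : 0 ≤ t) (hu : 0 < u) :
    stdNormalTail (√(t * u)) = ∫ s in Ioi √t, √u * stdNormalPDF (s * √u) := by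
  have hsu : 0 < √u := sqrt_pos.2 hu
  rw [integral_const_mul, integral_comp_mul_right_Ioi _ _ hsu, smul_eq_mul, ← mul_assoc,
    mul_inv_cancel₀ hsu.ne', one_mul, ← sqrt_mul ht, stdNormalTail]

lemma integral_stdNormalTail_sqrt_mul_gammaMeasure {m : ℕ} (hm : 0 < m) {t : ℝ} (ht : 0 ≤ t) :
    ∫ u, stdNormalTail (√(t * u)) ∂gammaMeasure (m / 2) (m / 2) = tTail m √t := by
  have hk : (0 : ℝ) < m / 2 := by positivity
  set ν := gammaMeasure (m / 2 : ℝ) (m / 2)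
  have : IsProbabilityMeasure ν := isProbabilityMeasure_gammaMeasure hk hk
  set G : ℝ → ℝ → ℝ := fun u s => √u * stdNormalPDF (s * √u)
  have hG : ∀ᵐ u ∂ν, stdNormalTail (√(t * u)) = ∫ s in Ioi √t, G u s :=
    ae_pos_gammaMeasure.mono fun u hu => stdNormalTail_sqrt_mul_eq ht hu
  have hInt : Integrable (Function.uncurry G) (ν.prod (volume.restrict (Ioi √t))) := by
    have hcont : Continuous (Function.uncurry G) := by
      simp only [G]; fun_prop
    refine (integrable_prod_iff hcont.aestronglyMeasurable).2 ⟨?_, ?_⟩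
    · filter_upwards [ae_pos_gammaMeasure] with u hu
      exact (((integrable_comp_mul_right_iff stdNormalPDF (sqrt_pos.2 hu).ne').2
        integrable_stdNormalPDF).const_mul √u).restrict
    · refine (integrable_stdNormalTail_comp (f := fun u => √(t * u)) (by fun_prop)).congr ?_
      filter_upwards [hG] with u hu
      simp only [Function.uncurry_apply_pair, G, norm_of_nonneg
        (mul_nonneg (sqrt_nonneg u) (stdNormalPDF_nonneg _)), hu]
  rw [integral_congr_ae hG, integral_integral_swap hInt]
  exact setIntegral_congr_fun measurableSet_Ioi fun s _ =>
    integral_sqrt_mul_stdNormalPDF_gammaMeasure hm s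

lemma integrableOn_chi2OverMPDF {m : ℕ} (hm : 0 < m) : IntegrableOn (chi2OverMPDF m) (Ioi 0) := by
  have hk : (0 : ℝ) < m / 2 := by positivity
  have := isProbabilityMeasure_gammaMeasure hk hk
  refine Integrable.of_integral_ne_zero ?_
  simpa using (setIntegral_chi2OverMPDF_mul hm 1).trans_ne (by simp)

lemma setIntegral_Ioi_inv_mul_comp_div {c : ℝ} (hc : 0 < c) (f : ℝ → ℝ) :
    ∫ y in Ioi 0, c⁻¹ * f (y / c) = ∫ u in Ioi 0, f u := by
  simp_rw [integral_const_mul, div_eq_mul_inv]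
  rw [integral_comp_mul_right_Ioi f 0 (inv_pos.2 hc), zero_mul, smul_eq_mul, inv_inv,
    inv_mul_cancel_left₀ hc.ne']

section Welch

variable {m : ℕ} {τ2 σ2 t : ℝ}

lemma integrable_welchTail_integrand (hm : 0 < m) (hτ : 0 ≤ τ2) (hσ : 0 < σ2) :
    Integrable (fun p : ℝ × ℝ =>
      {p : ℝ × ℝ | t ≤ p.1 ^ 2 / (τ2 + p.2)}.indicator (fun _ => (1 : ℝ)) p *
        normalPDF (τ2 + σ2) p.1 * (σ2⁻¹ * chi2OverMPDF m (p.2 / σ2)))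
      (volume.prod (volume.restrict (Ioi 0))) := by
  have hS : MeasurableSet {p : ℝ × ℝ | t ≤ p.1 ^ 2 / (τ2 + p.2)} :=
    measurableSet_le measurable_const (by fun_prop)
  have hchi : IntegrableOn (fun y => σ2⁻¹ * chi2OverMPDF m (y / σ2)) (Ioi 0) := by
    simp_rw [div_eq_mul_inv]
    refine Integrable.const_mul ?_ _
    exact (integrableOn_Ioi_comp_mul_right_iff _ 0 (inv_pos.2 hσ)).2
      (by rw [zero_mul]; exact integrableOn_chi2OverMPDF hm)
  refine (((integrable_normalPDF (add_pos_of_nonneg_of_pos hτ hσ)).mul_prod hchi).indicator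
    hS).congr (ae_of_all _ fun p => ?_)
  simp only [indicator]
  split_ifs <;> ring

lemma welchTail_eq_setIntegral (hm : 0 < m) (hτ : 0 ≤ τ2) (hσ : 0 < σ2) :
    welchTail m τ2 σ2 t = ∫ y in Ioi 0,
      σ2⁻¹ * chi2OverMPDF m (y / σ2) * (2 * stdNormalTail (√(t * (τ2 + y) / (τ2 + σ2)))) := by
  rw [welchTail, integral_integral_swap (integrable_welchTail_integrand hm hτ hσ)]
  refine setIntegral_congr_fun measurableSet_Ioi fun y (hy : 0 < y) => ?_
  have hsection : ∀ x : ℝ,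
      {p : ℝ × ℝ | t ≤ p.1 ^ 2 / (τ2 + p.2)}.indicator (fun _ => (1 : ℝ)) (x, y) =
        {x : ℝ | t * (τ2 + y) ≤ x ^ 2}.indicator (fun _ => (1 : ℝ)) x := fun x => by
    simp only [indicator, mem_ofPred_eq, le_div_iff₀ (by linarith : 0 < τ2 + y)]
  simp_rw [hsection]
  rw [integral_mul_const, integral_indicator_le_sq_mul_normalPDF (by positivity), mul_comm]

lemma welchTail_eq_integral_gammaMeasure (hm : 0 < m) (hτ : 0 ≤ τ2) (hσ : 0 < σ2) :
    welchTail m τ2 σ2 t = 2 * ∫ u, stdNormalTail (√(t * (σ2 / (τ2 + σ2) * u + τ2 / (τ2 + σ2))))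
      ∂gammaMeasure (m / 2) (m / 2) := by
  have hv : 0 < τ2 + σ2 := add_pos_of_nonneg_of_pos hτ hσ
  rw [welchTail_eq_setIntegral hm hτ hσ, ← setIntegral_chi2OverMPDF_mul hm, ← integral_const_mul]
  conv_rhs => rw [← setIntegral_Ioi_inv_mul_comp_div hσ]
  refine setIntegral_congr_fun measurableSet_Ioi fun y _ => ?_
  rw [show t * (τ2 + y) / (τ2 + σ2) = t * (σ2 / (τ2 + σ2) * (y / σ2) + τ2 / (τ2 + σ2)) by
    field_simp; ring]
  ring

end Welch

section Jensen

variable {ν : Measure ℝ} [IsProbabilityMeasure ν] {g : ℝ → ℝ} {a b : ℝ}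

lemma ConvexOn.map_one_le_integral_comp_mul_add (hg : ConvexOn ℝ (Ici 0) g)
    (hgc : ContinuousOn g (Ici 0)) (hν : ∀ᵐ u ∂ν, 0 ≤ u) (hmean : ∫ u, u ∂ν = 1)
    (ha : 0 ≤ a) (hb : 0 ≤ b) (hab : a + b = 1) (hgi : Integrable (fun u => g (a * u + b)) ν) :
    g 1 ≤ ∫ u, g (a * u + b) ∂ν := by
  have hid : Integrable (fun u => u) ν := .of_integral_ne_zero (hmean ▸ one_ne_zero)
  have hfi : Integrable (fun u => a * u + b) ν := (hid.const_mul a).add (integrable_const b)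
  have hmean' : ∫ u, a * u + b ∂ν = 1 := by
    rw [integral_add (hid.const_mul a) (integrable_const b), integral_const_mul, hmean,
      integral_const, probReal_univ, one_smul, mul_one, hab]
  simpa only [hmean'] using hg.map_integral_le hgc isClosed_Ici
    (hν.mono fun u hu => (by positivity : 0 ≤ a * u + b)) hfi hgi

lemma ConvexOn.integral_comp_mul_add_le (hg : ConvexOn ℝ (Ici 0) g)
    (hgc : ContinuousOn g (Ici 0)) (hν : ∀ᵐ u ∂ν, 0 ≤ u) (hmean : ∫ u, u ∂ν = 1)
    (ha : 0 ≤ a) (hb : 0 ≤ b) (hab : a + b = 1) (hgi : Integrable g ν)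
    (hgi' : Integrable (fun u => g (a * u + b)) ν) :
    ∫ u, g (a * u + b) ∂ν ≤ ∫ u, g u ∂ν := by
  have hg1 : g 1 ≤ ∫ u, g u ∂ν := by
    simpa using hg.map_one_le_integral_comp_mul_add hgc hν hmean zero_le_one le_rfl (add_zero 1)
      (by simpa using hgi)
  calc ∫ u, g (a * u + b) ∂ν ≤ ∫ u, a * g u + b * g 1 ∂ν :=
        integral_mono_ae hgi' ((hgi.const_mul a).add (integrable_const _))
          (hν.mono fun u hu => by
            simpa only [smul_eq_mul, mul_one] using hg.2 hu (mem_Ici.2 zero_le_one) ha hb hab)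
    _ = a * ∫ u, g u ∂ν + b * g 1 := by
        rw [integral_add (hgi.const_mul a) (integrable_const _), integral_const_mul,
          integral_const, probReal_univ, one_smul]
    _ ≤ a * ∫ u, g u ∂ν + b * ∫ u, g u ∂ν := by gcongr
    _ = ∫ u, g u ∂ν := by rw [← add_mul, hab, one_mul]

end Jensen

/-- The Welch-type tail is sandwiched between the squared-normal tail and the squared-t tail. -/
theorem stmt_2 (m : ℕ) (hm : 1 ≤ m) (τ2 σ2 : ℝ) (hτ : 0 ≤ τ2) (hσ : 0 < σ2)
    (t : ℝ) (ht : 0 ≤ t) :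
    2 * stdNormalTail (Real.sqrt t) ≤ welchTail m τ2 σ2 t ∧
      welchTail m τ2 σ2 t ≤ 2 * tTail m (Real.sqrt t) := by
  have hk : (0 : ℝ) < m / 2 := by positivity
  have := isProbabilityMeasure_gammaMeasure hk hk
  have hv : 0 < τ2 + σ2 := add_pos_of_nonneg_of_pos hτ hσ
  have hg := convexOn_stdNormalTail_sqrt_mul ht
  have hgc : ContinuousOn (fun s => stdNormalTail √(t * s)) (Ici 0) :=
    (continuous_stdNormalTail.comp (by fun_prop)).continuousOn
  have hν : ∀ᵐ u ∂gammaMeasure (m / 2) (m / 2), 0 ≤ u := ae_pos_gammaMeasure.mono fun _ => le_of_lt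
  have hmean : ∫ u, u ∂gammaMeasure (m / 2) (m / 2) = 1 := by
    rw [integral_id_gammaMeasure hk hk, div_self hk.ne']
  have hab : σ2 / (τ2 + σ2) + τ2 / (τ2 + σ2) = 1 := by field_simp; ring
  have hgi := integrable_stdNormalTail_comp (ν := gammaMeasure (m / 2) (m / 2))
    (f := fun u => √(t * u)) (by fun_prop)
  have hgi' := integrable_stdNormalTail_comp (ν := gammaMeasure (m / 2) (m / 2))
    (f := fun u => √(t * (σ2 / (τ2 + σ2) * u + τ2 / (τ2 + σ2)))) (by fun_prop)
  rw [welchTail_eq_integral_gammaMeasure hm hτ hσ,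
    ← integral_stdNormalTail_sqrt_mul_gammaMeasure hm ht]
  constructor
  · have := hg.map_one_le_integral_comp_mul_add hgc hν hmean (by positivity) (by positivity) hab
      hgi'
    rw [mul_one] at this
    linarith
  · have := hg.integral_comp_mul_add_le hgc hν hmean (by positivity) (by positivity) hab hgi hgi'
    linarith
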